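/- arXiv:0706.1659 — 2 statements merged into one kernel-verified Lean document; each statement's English description precedes it below -/
import Mathlib

section
/- If θ > 1 and ϑ > 1 are multiplicatively independent real numbers (θ^l = ϑ^k with integers l,k implies l = k = 0), then for any reals a, a' > 0 and b, b', and positive integers p, q, the set of ratios {(a θ^{pj} + b) / (a' ϑ^{qj'} + b') : j, j' ∈ ℕ} is dense in ℝ⁺. -/
open Filter Topology

/-- Bi-infinite sequences over an alphabet. -/
abbrev BiSeq (A : Type*) := ℤ → A

/-- The shift by `n`: `(shiftZ n x) m = x (m + n)`. -/
def shiftZ {A : Type*} (n : ℤ) (x : BiSeq A) : BiSeq A := fun m => x (m + n)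

/-- The (two-sided) orbit of a sequence under the shift. -/
def orbitZ {A : Type*} (x : BiSeq A) : Set (BiSeq A) := {y | ∃ n : ℤ, y = shiftZ n x}

/-- A subshift: a closed shift-invariant set of sequences. -/
def IsSubshift {A : Type*} [TopologicalSpace A] (X : Set (BiSeq A)) : Prop :=
  IsClosed X ∧ ∀ x ∈ X, ∀ n : ℤ, shiftZ n x ∈ X

/-- A minimal subshift: nonempty, and every orbit closure is the whole set. -/
def IsMinimalSubshift {A : Type*} [TopologicalSpace A] (X : Set (BiSeq A)) : Prop :=
  IsSubshift X ∧ X.Nonempty ∧ ∀ x ∈ X, closure (orbitZ x) = X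

/-- The product shift on pairs of sequences. -/
def prodShiftZ {A B : Type*} (n : ℤ) (p : BiSeq A × BiSeq B) : BiSeq A × BiSeq B :=
  (shiftZ n p.1, shiftZ n p.2)

/-- Orbit of a pair under the product shift. -/
def orbitP {A B : Type*} (p : BiSeq A × BiSeq B) : Set (BiSeq A × BiSeq B) :=
  {q | ∃ n : ℤ, q = prodShiftZ n p}

/-- A minimal set for the product shift: closed, nonempty, invariant, all orbits dense. -/
def IsMinimalSetP {A B : Type*} [TopologicalSpace A] [TopologicalSpace B]
    (M : Set (BiSeq A × BiSeq B)) : Prop :=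
  IsClosed M ∧ M.Nonempty ∧ (∀ p ∈ M, ∀ n : ℤ, prodShiftZ n p ∈ M) ∧
    ∀ p ∈ M, closure (orbitP p) = M

/-- A minimal set for the shift on sequences. -/
def IsMinimalSetZ {A : Type*} [TopologicalSpace A] (M : Set (BiSeq A)) : Prop :=
  IsClosed M ∧ M.Nonempty ∧ (∀ x ∈ M, ∀ n : ℤ, shiftZ n x ∈ M) ∧
    ∀ x ∈ M, closure (orbitZ x) = M

open Classical in
/-- The standard subshift metric `d(a,b) = 2^{-min{|j| : a_j ≠ b_j}}`. -/
noncomputable def seqDist {A : Type*} (a b : BiSeq A) : ℝ :=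
  if a = b then 0
  else (1/2 : ℝ) ^ (sInf {n : ℕ | ∃ j : ℤ, j.natAbs = n ∧ a j ≠ b j})

/-- Product metric on pairs of sequences. -/
noncomputable def prodDist {A B : Type*} (p q : BiSeq A × BiSeq B) : ℝ :=
  seqDist p.1 q.1 + seqDist p.2 q.2

/-- A set of integers is syndetic if it meets every interval of some fixed length. -/
def SyndeticZ (S : Set ℤ) : Prop := ∃ m : ℕ, ∀ n : ℤ, ∃ k ∈ S, n ≤ k ∧ k ≤ n + m

/-- A sequence is almost periodic if its set of ε-periods is syndetic for every ε > 0. -/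
def IsAlmostPeriodicSeq {A : Type*} (v : BiSeq A) : Prop :=
  ∀ ε : ℝ, 0 < ε → SyndeticZ {n : ℤ | seqDist (shiftZ n v) v < ε}

/-- The word `w` occurs in `x` at position `n`. -/
def OccursAt {A : Type*} (w : List A) (x : BiSeq A) (n : ℤ) : Prop :=
  ∀ i : Fin w.length, x (n + (i : ℕ)) = w.get i

/-- Extension of a substitution to finite words by concatenation. -/
def substW {A : Type*} (ξ : A → List A) (w : List A) : List A := (w.flatMap ξ)

/-- `substPow ξ k a` is the word `ξ^k(a)`. -/
def substPow {A : Type*} (ξ : A → List A) (k : ℕ) (a : A) : List A := (substW ξ)^[k] [a]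

/-- A substitution is primitive if some power maps every letter to a word containing all letters. -/
def IsPrimitive {A : Type*} (ξ : A → List A) : Prop :=
  ∃ k : ℕ, 0 < k ∧ ∀ a b : A, b ∈ substPow ξ k a

/-- The hull (subshift) of a substitution: sequences all of whose factors occur in some `ξ^k(a)`. -/
def substHull {A : Type*} (ξ : A → List A) : Set (BiSeq A) :=
  {x | ∀ (i : ℤ) (m : ℕ), ∃ (a : A) (k : ℕ),
    ((List.range m).map (fun j => x (i + j))) <:+: substPow ξ k a}

/-- The substitution matrix: entry `(a,b)` counts occurrences of `b` in `ξ(a)`. -/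
def substMatrix {A : Type*} [DecidableEq A] (ξ : A → List A) : Matrix A A ℕ :=
  fun a b => (ξ a).count b

/-- `θ` is the dominant (Perron–Frobenius) eigenvalue of the nonnegative integer matrix `M`. -/
def IsDominantEigenvalue {A : Type*} [Fintype A] [DecidableEq A]
    (M : Matrix A A ℕ) (θ : ℝ) : Prop :=
  (θ : ℂ) ∈ spectrum ℂ (M.map (fun n : ℕ => (n : ℂ))) ∧
    ∀ μ ∈ spectrum ℂ (M.map (fun n : ℕ => (n : ℂ))), ‖μ‖ ≤ θ

/-- Two positive reals are multiplicatively independent. -/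
def MultIndep (θ ϑ : ℝ) : Prop := ∀ l k : ℤ, θ ^ l = ϑ ^ k → l = 0 ∧ k = 0

/-- `u` is a one-sided fixed point of the substitution `ξ`. -/
def IsOneSidedFixedPoint {A : Type*} (ξ : A → List A) (u : ℕ → A) : Prop :=
  ∀ m : ℕ, ((List.range m).map u) <+: substW ξ ((List.range m).map u)

/-- The Thue–Morse substitution `a ↦ ab, b ↦ ba` on `Bool` (`a = false`, `b = true`). -/
def thueMorse : Bool → List Bool := fun x => [x, !x]

/-- The Fibonacci substitution `a ↦ ab, b ↦ a`. -/
def fibonacciSubst : Bool → List Bool := fun x => if x then [false] else [false, true]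

/-- The period-doubling substitution `a ↦ ab, b ↦ aa`. -/
def periodDoubling : Bool → List Bool := fun x => if x then [false, false] else [false, true]

/-- Pigeonhole: a nonzero, arbitrarily small combination `L·α - m·β` with `L` a positive natural. -/
lemma small_step (α β : ℝ) (hβ : 0 < β) (hirr : Irrational (α / β))
    (ε : ℝ) (hε : 0 < ε) :
    ∃ (L : ℕ) (m : ℤ), 0 < L ∧ (L : ℝ) * α - m * β ≠ 0 ∧ |(L : ℝ) * α - m * β| < ε := by
  set γ := α / β with hγ
  obtain ⟨n, hn⟩ := exists_nat_gt (β / ε)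
  -- buckets
  have hbucket : ∀ x : ℝ, 0 ≤ Int.fract x * (n + 1) ∧ Int.fract x * (n + 1) < (n + 1 : ℝ) := by
    intro x
    constructor
    · exact mul_nonneg (Int.fract_nonneg x) (by positivity)
    · have := Int.fract_lt_one x
      nlinarith [Int.fract_nonneg x]
  set F : Fin (n + 2) → Fin (n + 1) := fun i =>
    ⟨(⌊Int.fract ((i : ℕ) * γ) * (n + 1)⌋).toNat, by
      have h1 := (hbucket ((i : ℕ) * γ)).2
      have h2 := (hbucket ((i : ℕ) * γ)).1
      have : (⌊Int.fract ((i : ℕ) * γ) * (n + 1)⌋ : ℝ) < (n + 1 : ℝ) :=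
        lt_of_le_of_lt (Int.floor_le _) h1
      have hfl : ⌊Int.fract ((i : ℕ) * γ) * (n + 1)⌋ < (n + 1 : ℤ) := by exact_mod_cast this
      have hfl0 : 0 ≤ ⌊Int.fract ((i : ℕ) * γ) * (n + 1)⌋ := Int.floor_nonneg.2 h2
      omega⟩ with hF
  obtain ⟨i, i', hne, hFeq⟩ := Fintype.exists_ne_map_eq_of_card_lt F (by simp)
  -- WLOG i' < i
  wlog hlt : (i' : ℕ) < (i : ℕ) generalizing i i'
  · refine this i' i hne.symm hFeq.symm ?_
    have hne' : (i : ℕ) ≠ (i' : ℕ) := fun h => hne (Fin.ext h)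
    omega
  set x := ((i : ℕ) : ℝ) * γ
  set y := ((i' : ℕ) : ℝ) * γ
  have hfloor_eq : ⌊Int.fract x * (n + 1)⌋ = ⌊Int.fract y * (n + 1)⌋ := by
    have hv : (⌊Int.fract x * (n + 1)⌋).toNat = (⌊Int.fract y * (n + 1)⌋).toNat :=
      congrArg Fin.val hFeq
    have h2x : 0 ≤ ⌊Int.fract x * (n + 1)⌋ := Int.floor_nonneg.2 (hbucket x).1
    have h2y : 0 ≤ ⌊Int.fract y * (n + 1)⌋ := Int.floor_nonneg.2 (hbucket y).1
    omega
  have hfr : |Int.fract x - Int.fract y| < 1 / (n + 1 : ℝ) := by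
    have h1 := Int.floor_le (Int.fract x * (n + 1))
    have h2 := Int.lt_floor_add_one (Int.fract x * (n + 1))
    have h3 := Int.floor_le (Int.fract y * (n + 1))
    have h4 := Int.lt_floor_add_one (Int.fract y * (n + 1))
    rw [hfloor_eq] at h1 h2
    have hn1 : (0 : ℝ) < (n + 1 : ℝ) := by positivity
    rw [abs_lt]
    constructor
    · rw [neg_lt, lt_div_iff₀ hn1]
      nlinarith
    · rw [lt_div_iff₀ hn1]
      nlinarith
  refine ⟨(i : ℕ) - (i' : ℕ), ⌊x⌋ - ⌊y⌋, by omega, ?_, ?_⟩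
  · -- nonzero
    intro h
    have hβ' : β ≠ 0 := ne_of_gt hβ
    have hL : (((i : ℕ) - (i' : ℕ) : ℕ) : ℝ) ≠ 0 := by
      have : (0:ℕ) < (i : ℕ) - (i' : ℕ) := by omega
      positivity
    apply hirr
    refine ⟨(⌊x⌋ - ⌊y⌋ : ℤ) / (((i : ℕ) - (i' : ℕ) : ℕ) : ℚ), ?_⟩
    have hα : (((i : ℕ) - (i' : ℕ) : ℕ) : ℝ) * α = ((⌊x⌋ - ⌊y⌋ : ℤ) : ℝ) * β := by
      linarith [h]
    have : γ = ((⌊x⌋ - ⌊y⌋ : ℤ) : ℝ) / (((i : ℕ) - (i' : ℕ) : ℕ) : ℝ) := by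
      rw [hγ]
      field_simp
      field_simp at hα
      linarith [hα]
    rw [this]
    push_cast
    ring
  · -- small
    have hkey : (((i : ℕ) - (i' : ℕ) : ℕ) : ℝ) * α - ((⌊x⌋ - ⌊y⌋ : ℤ) : ℝ) * β
        = (Int.fract x - Int.fract y) * β := by
      have hc : (((i : ℕ) - (i' : ℕ) : ℕ) : ℝ) = ((i : ℕ) : ℝ) - ((i' : ℕ) : ℝ) := by
        push_cast [Nat.cast_sub (le_of_lt hlt)]; ring
      have hα : α = γ * β := by rw [hγ]; field_simp
      rw [hc, hα]
      have hx : Int.fract x = x - ⌊x⌋ := Int.self_sub_floor x ▸ rfl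
      have hy : Int.fract y = y - ⌊y⌋ := rfl
      rw [Int.fract, Int.fract]
      push_cast
      ring
    rw [hkey, abs_mul, abs_of_pos hβ]
    calc |Int.fract x - Int.fract y| * β < (1 / (n + 1 : ℝ)) * β := by
          apply mul_lt_mul_of_pos_right hfr hβ
      _ ≤ ε := by
          rw [div_mul_eq_mul_div, one_mul, div_le_iff₀ (by positivity)]
          have : β / ε < (n : ℝ) := hn
          rw [div_lt_iff₀ hε] at this
          nlinarith


/-- Stepping helper: given a small positive step `L·α - m·β` with `L ∈ ℕ⁺`, `m ≥ 0`,
we can hit any target within `ε` with large coefficients. -/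
lemma step_helper (α β t ε : ℝ) (N : ℕ) (hα : 0 < α) (hβ : 0 < β)
    (L : ℕ) (m : ℤ) (hL : 0 < L) (hm : 0 ≤ m)
    (hδ : 0 < (L : ℝ) * α - m * β) (hδε : (L : ℝ) * α - m * β < ε) :
    ∃ j j' : ℕ, N ≤ j ∧ N ≤ j' ∧ |(j : ℝ) * α - (j' : ℝ) * β - t| < ε := by
  set δ := (L : ℝ) * α - m * β with hδdef
  obtain ⟨R, hR⟩ := exists_nat_ge (max (N : ℝ) ((N * δ - t) / β))
  have hRN : (N : ℝ) ≤ R := le_trans (le_max_left _ _) hR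
  have hRN' : N ≤ R := by exact_mod_cast hRN
  have hRβ : (N : ℝ) * δ - t ≤ (R : ℝ) * β := by
    have h1 : (N * δ - t) / β ≤ (R : ℝ) := le_trans (le_max_right _ _) hR
    rw [div_le_iff₀ hβ] at h1
    linarith
  set c : ℤ := ⌈(t + R * β) / δ⌉ with hc
  have hcN : (N : ℤ) ≤ c := by
    have h1 : (N : ℝ) ≤ (t + R * β) / δ := by
      rw [le_div_iff₀ hδ]; linarith
    have h2 : ((N : ℤ) : ℝ) ≤ (c : ℝ) := le_trans (by exact_mod_cast h1) (Int.le_ceil _)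
    exact_mod_cast h2
  have hc0 : 0 ≤ c := le_trans (by exact_mod_cast Nat.zero_le N) hcN
  have hcast : ((c.toNat : ℕ) : ℝ) = (c : ℝ) := by exact_mod_cast Int.toNat_of_nonneg hc0
  have hmcast : ((m.toNat : ℕ) : ℝ) = (m : ℝ) := by exact_mod_cast Int.toNat_of_nonneg hm
  refine ⟨c.toNat * L, c.toNat * m.toNat + R, ?_, ?_, ?_⟩
  · have h1 : N ≤ c.toNat := by omega
    calc N ≤ c.toNat := h1
      _ ≤ c.toNat * L := Nat.le_mul_of_pos_right _ hL
  · omega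
  · have hval : ((c.toNat * L : ℕ) : ℝ) * α - ((c.toNat * m.toNat + R : ℕ) : ℝ) * β - t
        = (c : ℝ) * δ - (t + R * β) := by
      push_cast [hcast, hmcast]
      rw [hδdef]; ring
    rw [hval]
    have h1 : (t + R * β) / δ ≤ (c : ℝ) := Int.le_ceil _
    have h2 : (c : ℝ) < (t + R * β) / δ + 1 := Int.ceil_lt_add_one _
    rw [div_le_iff₀ hδ] at h1
    have h2a : (c : ℝ) - 1 < (t + R * β) / δ := by linarith
    rw [lt_div_iff₀ hδ] at h2a
    have h2' : (c : ℝ) * δ < t + R * β + δ := by nlinarith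
    rw [abs_of_nonneg (by linarith)]
    linarith

lemma key_dense (α β : ℝ) (hα : 0 < α) (hβ : 0 < β) (hirr : Irrational (α / β))
    (t ε : ℝ) (hε : 0 < ε) (N : ℕ) :
    ∃ j j' : ℕ, N ≤ j ∧ N ≤ j' ∧ |(j : ℝ) * α - (j' : ℝ) * β - t| < ε := by
  obtain ⟨L, m, hL, hne, hsm⟩ := small_step α β hβ hirr (min ε β) (lt_min hε hβ)
  have hεβ : |(L : ℝ) * α - m * β| < ε := lt_of_lt_of_le hsm (min_le_left _ _)
  have hββ : |(L : ℝ) * α - m * β| < β := lt_of_lt_of_le hsm (min_le_right _ _)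
  rcases lt_or_gt_of_ne hne with hneg | hpos
  · -- negative step: swap roles
    have hδ' : 0 < (m : ℝ) * β - (L : ℝ) * α := by linarith
    have hLα : 0 < (L : ℝ) * α := by positivity
    have hm1 : 0 < m := by
      by_contra h
      push_neg at h
      have hm0 : (m : ℝ) ≤ 0 := by exact_mod_cast h
      nlinarith
    have hmt : ((m.toNat : ℕ) : ℝ) = (m : ℝ) := by
      exact_mod_cast Int.toNat_of_nonneg (le_of_lt hm1)
    have hδε' : ((m.toNat : ℕ) : ℝ) * β - ((L : ℕ) : ℤ) * α < ε := by
      rw [hmt]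
      push_cast
      calc (m : ℝ) * β - (L : ℝ) * α ≤ |(L : ℝ) * α - m * β| := by
            rw [abs_sub_comm]; exact le_abs_self _
        _ < ε := hεβ
    obtain ⟨j, j', hj, hj', hv⟩ := step_helper β α (-t) ε N hβ hα m.toNat (L : ℤ)
      (by omega) (by positivity)
      (by rw [hmt]; push_cast; linarith) hδε'
    refine ⟨j', j, hj', hj, ?_⟩
    have : (j : ℝ) * β - (j' : ℝ) * α - (-t) = -((j' : ℝ) * α - (j : ℝ) * β - t) := by ring
    rw [this, abs_neg] at hv
    exact hv
  · exact step_helper α β t ε N hα hβ L m hL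
      (by
        by_contra h
        push_neg at h
        have hmle : m ≤ -1 := by omega
        have hm0 : (m : ℝ) ≤ -1 := by exact_mod_cast hmle
        have : (L : ℝ) * α - m * β ≤ |(L : ℝ) * α - m * β| := le_abs_self _
        nlinarith)
      hpos
      (lt_of_le_of_lt (le_abs_self _) hεβ)

lemma log_ratio_irrational (θ ϑ : ℝ) (hθ : 1 < θ) (hϑ : 1 < ϑ) (hind : MultIndep θ ϑ)
    (p q : ℕ) (hp : 0 < p) (hq : 0 < q) :
    Irrational ((p * Real.log θ) / (q * Real.log ϑ)) := by
  rintro ⟨r, hr⟩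
  have hθ0 : (0 : ℝ) < θ := lt_trans one_pos hθ
  have hϑ0 : (0 : ℝ) < ϑ := lt_trans one_pos hϑ
  have hlogϑ : 0 < Real.log ϑ := Real.log_pos hϑ
  have hqϑ : (q : ℝ) * Real.log ϑ ≠ 0 := by positivity
  have h1 : (r : ℝ) * ((q : ℝ) * Real.log ϑ) = (p : ℝ) * Real.log θ := by
    field_simp at hr
    linarith [hr]
  have hrd : ((r.den : ℝ)) ≠ 0 := by
    have := r.den_nz
    positivity
  have hrcast : (r : ℝ) = (r.num : ℝ) / (r.den : ℝ) := by
    rw [Rat.cast_def]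
  have key : ((r.den * p : ℕ) : ℝ) * Real.log θ = ((r.num * q : ℤ) : ℝ) * Real.log ϑ := by
    push_cast
    rw [hrcast] at h1
    field_simp at h1
    nlinarith [h1]
  have hpow : θ ^ ((r.den * p : ℕ) : ℤ) = ϑ ^ (r.num * q : ℤ) := by
    have hl : Real.log (θ ^ ((r.den * p : ℕ) : ℤ)) = Real.log (ϑ ^ (r.num * q : ℤ)) := by
      rw [Real.log_zpow, Real.log_zpow]
      push_cast
      push_cast at key
      linarith [key]
    have h2 : (0 : ℝ) < θ ^ ((r.den * p : ℕ) : ℤ) := zpow_pos hθ0 _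
    have h3 : (0 : ℝ) < ϑ ^ (r.num * q : ℤ) := zpow_pos hϑ0 _
    calc θ ^ ((r.den * p : ℕ) : ℤ) = Real.exp (Real.log (θ ^ ((r.den * p : ℕ) : ℤ))) :=
          (Real.exp_log h2).symm
      _ = Real.exp (Real.log (ϑ ^ (r.num * q : ℤ))) := by rw [hl]
      _ = ϑ ^ (r.num * q : ℤ) := Real.exp_log h3
  obtain ⟨h4, _⟩ := hind _ _ hpow
  have : r.den * p ≠ 0 := Nat.mul_ne_zero r.den_nz (Nat.pos_iff_ne_zero.mp hp)
  exact this (by exact_mod_cast h4)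

lemma ratio_eq (E E' A B A' B' : ℝ) (hE : E ≠ 0) (hE' : E' ≠ 0) :
    (A * E + B) / (A' * E' + B') = (E / E') * ((A + B * E⁻¹) / (A' + B' * E'⁻¹)) := by
  rw [div_mul_div_comm]
  congr 1
  · field_simp
  · field_simp


/-- For multiplicatively independent `θ, ϑ > 1`, the set of ratios
`(a θ^{pj} + b)/(a' ϑ^{qj'} + b')` is dense in the positive reals. -/
theorem ratios_dense_of_multIndep
    (θ ϑ : ℝ) (hθ : 1 < θ) (hϑ : 1 < ϑ) (hind : MultIndep θ ϑ)
    (a a' b b' : ℝ) (ha : 0 < a) (ha' : 0 < a') (p q : ℕ) (hp : 0 < p) (hq : 0 < q) :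
    ∀ x : ℝ, 0 < x →
      x ∈ closure {r : ℝ | ∃ j j' : ℕ,
        r = (a * θ ^ (p * j) + b) / (a' * ϑ ^ (q * j') + b')} := by
  intro x hx
  have hθ0 : (0 : ℝ) < θ := lt_trans one_pos hθ
  have hϑ0 : (0 : ℝ) < ϑ := lt_trans one_pos hϑ
  set α := (p : ℝ) * Real.log θ with hαdef
  set β := (q : ℝ) * Real.log ϑ with hβdef
  have hα : 0 < α := mul_pos (by exact_mod_cast hp) (Real.log_pos hθ)
  have hβ : 0 < β := mul_pos (by exact_mod_cast hq) (Real.log_pos hϑ)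
  have hirr : Irrational (α / β) := log_ratio_irrational θ ϑ hθ hϑ hind p q hp hq
  have hxa : 0 < x * a' / a := by positivity
  set t := Real.log (x * a' / a) with htdef
  have H : ∀ n : ℕ, ∃ j j' : ℕ, n ≤ j ∧ n ≤ j' ∧
      |(j : ℝ) * α - (j' : ℝ) * β - t| < 1 / (n + 1) :=
    fun n => key_dense α β hα hβ hirr t _ (by positivity) n
  choose J J' hJ hJ' hs using H
  set f : ℕ → ℝ := fun n => (a * θ ^ (p * J n) + b) / (a' * ϑ ^ (q * J' n) + b') with hfdef
  have hmem : ∀ n, f n ∈ {r : ℝ | ∃ j j' : ℕ,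
      r = (a * θ ^ (p * j) + b) / (a' * ϑ ^ (q * j') + b')} := fun n => ⟨J n, J' n, rfl⟩
  -- rewrite powers as exponentials
  have hexpθ : ∀ n : ℕ, θ ^ (p * J n) = Real.exp ((J n : ℝ) * α) := by
    intro n
    have h1 : ((J n : ℝ) * α) = ((p * J n : ℕ) : ℝ) * Real.log θ := by push_cast; ring
    rw [h1, Real.exp_nat_mul, Real.exp_log hθ0]
  have hexpϑ : ∀ n : ℕ, ϑ ^ (q * J' n) = Real.exp ((J' n : ℝ) * β) := by
    intro n
    have h1 : ((J' n : ℝ) * β) = ((q * J' n : ℕ) : ℝ) * Real.log ϑ := by push_cast; ring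
    rw [h1, Real.exp_nat_mul, Real.exp_log hϑ0]
  have hfeq : ∀ n : ℕ, f n = Real.exp ((J n : ℝ) * α - (J' n : ℝ) * β) *
      ((a + b * (Real.exp ((J n : ℝ) * α))⁻¹) / (a' + b' * (Real.exp ((J' n : ℝ) * β))⁻¹)) := by
    intro n
    rw [hfdef]
    simp only
    rw [hexpθ n, hexpϑ n, Real.exp_sub]
    exact ratio_eq _ _ _ _ _ _ (Real.exp_ne_zero _) (Real.exp_ne_zero _)
  -- limits
  have hst : Tendsto (fun n => (J n : ℝ) * α - (J' n : ℝ) * β) atTop (𝓝 t) := by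
    have h0 : Tendsto (fun n => ((J n : ℝ) * α - (J' n : ℝ) * β) - t) atTop (𝓝 0) := by
      exact squeeze_zero_norm
        (fun n => le_of_lt (by simpa [Real.norm_eq_abs] using hs n))
        tendsto_one_div_add_atTop_nhds_zero_nat
    have := h0.add_const t
    simpa using this
  have hJtend : Tendsto (fun n => (J n : ℝ)) atTop atTop :=
    tendsto_atTop_mono (fun n => by exact_mod_cast hJ n) tendsto_natCast_atTop_atTop
  have hJ'tend : Tendsto (fun n => (J' n : ℝ)) atTop atTop :=
    tendsto_atTop_mono (fun n => by exact_mod_cast hJ' n) tendsto_natCast_atTop_atTop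
  have hJα : Tendsto (fun n => (J n : ℝ) * α) atTop atTop := hJtend.atTop_mul_const hα
  have hJ'β : Tendsto (fun n => (J' n : ℝ) * β) atTop atTop := hJ'tend.atTop_mul_const hβ
  have hinv1 : Tendsto (fun n => (Real.exp ((J n : ℝ) * α))⁻¹) atTop (𝓝 0) := by
    have := Real.tendsto_exp_neg_atTop_nhds_zero.comp hJα
    simpa [Real.exp_neg, Function.comp_def] using this
  have hinv2 : Tendsto (fun n => (Real.exp ((J' n : ℝ) * β))⁻¹) atTop (𝓝 0) := by
    have := Real.tendsto_exp_neg_atTop_nhds_zero.comp hJ'β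
    simpa [Real.exp_neg, Function.comp_def] using this
  have hnum : Tendsto (fun n => a + b * (Real.exp ((J n : ℝ) * α))⁻¹) atTop (𝓝 (a + b * 0)) :=
    tendsto_const_nhds.add (tendsto_const_nhds.mul hinv1)
  have hden : Tendsto (fun n => a' + b' * (Real.exp ((J' n : ℝ) * β))⁻¹) atTop (𝓝 (a' + b' * 0)) :=
    tendsto_const_nhds.add (tendsto_const_nhds.mul hinv2)
  have hden0 : a' + b' * 0 ≠ 0 := by simp only [mul_zero, add_zero]; exact ne_of_gt ha'
  have hexp : Tendsto (fun n => Real.exp ((J n : ℝ) * α - (J' n : ℝ) * β)) atTop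
      (𝓝 (Real.exp t)) := (Real.continuous_exp.tendsto t).comp hst
  have hlim : Tendsto f atTop (𝓝 (Real.exp t * ((a + b * 0) / (a' + b' * 0)))) := by
    exact Tendsto.congr (fun n => (hfeq n).symm) (hexp.mul (hnum.div hden hden0))
  have hval : Real.exp t * ((a + b * 0) / (a' + b' * 0)) = x := by
    rw [htdef, Real.exp_log hxa]
    field_simp
    simp only [mul_zero, zero_mul, add_zero]
    exact mul_div_cancel_left₀ _ (ne_of_gt ha')
  rw [hval] at hlim
  exact mem_closure_of_tendsto hlim (Eventually.of_forall hmem)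
end

section
/- Let u = abbabaab⋯ be the Thue–Morse fixed point (with seed a) and w = abaaabab⋯ be the aperiodic fixed point of the period-doubling substitution. Then (abba, baaa) is a prefix of (u, σw), but for every j ∈ ℤ (within the domain of the one-sided orbit), the pair (abba, baaa) does not occur at any common position in the pair (u, w); consequently the product of the Thue–Morse hull and the period-doubling hull is not minimal. -/
open Filter Topology

namespace TMPDAux

/-! ### Basic lemmas about `substW`, `substPow` and prefixes -/

/-- The prefix of length `m` of a one-sided sequence. -/
def pref (u : ℕ → Bool) (m : ℕ) : List Bool := (List.range m).map u

lemma pref_length (u : ℕ → Bool) (m : ℕ) : (pref u m).length = m := by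
  simp [pref]

lemma pref_getD (u : ℕ → Bool) {m i : ℕ} (h : i < m) :
    (pref u m).getD i false = u i := by
  rw [List.getD_eq_getElem _ _ (by simpa [pref_length] using h)]
  simp [pref]

lemma pref_succ (u : ℕ → Bool) (m : ℕ) : pref u (m + 1) = pref u m ++ [u m] := by
  simp [pref, List.range_succ]

lemma pref_prefix (u : ℕ → Bool) {m m' : ℕ} (h : m ≤ m') : pref u m <+: pref u m' := by
  have : pref u m = (pref u m').take m := by
    rw [pref, pref, ← List.map_take, List.take_range, Nat.min_eq_left h]
  rw [this]
  exact List.take_prefix _ _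

lemma substW_append (ξ : Bool → List Bool) (l₁ l₂ : List Bool) :
    substW ξ (l₁ ++ l₂) = substW ξ l₁ ++ substW ξ l₂ := by
  simp [substW]

lemma substW_length {ξ : Bool → List Bool} (h2 : ∀ a, (ξ a).length = 2) (l : List Bool) :
    (substW ξ l).length = 2 * l.length := by
  induction l with
  | nil => simp [substW]
  | cons a t ih =>
      simp only [substW, List.flatMap_cons, List.length_append, h2 a] at ih ⊢
      rw [ih]; simp; ring

lemma getD_flatMap {f : Bool → List Bool} {B : ℕ} (hB : ∀ a, (f a).length = B) :
    ∀ (l : List Bool) (q j : ℕ), q < l.length → j < B →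
      (l.flatMap f).getD (B * q + j) false = (f (l.getD q false)).getD j false := by
  intro l
  induction l with
  | nil => intro q j hq; simp at hq
  | cons a t ih =>
      intro q j hq hj
      cases q with
      | zero =>
          simp only [List.flatMap_cons, Nat.mul_zero, Nat.zero_add]
          rw [List.getD_append _ _ _ _ (by rw [hB]; exact hj)]
          simp
      | succ q' =>
          simp only [List.flatMap_cons]
          rw [List.getD_append_right _ _ _ _ (by rw [hB]; nlinarith)]
          have e : B * (q' + 1) + j - (f a).length = B * q' + j := by rw [hB]; ring_nf; omega
          rw [e]
          have := ih q' j (by simpa using hq) hj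
          simpa using this

lemma doubling {ξ : Bool → List Bool} {u : ℕ → Bool} (h2 : ∀ a, (ξ a).length = 2)
    (hu : IsOneSidedFixedPoint ξ u) (m : ℕ) :
    pref u (2 * m) = substW ξ (pref u m) := by
  have h1 : pref u (2 * m) <+: substW ξ (pref u (2 * m)) := hu (2 * m)
  have h2' : substW ξ (pref u m) <+: substW ξ (pref u (2 * m)) := by
    obtain ⟨t, ht⟩ := pref_prefix u (show m ≤ 2 * m by omega)
    exact ⟨substW ξ t, by rw [← substW_append, ht]⟩
  have hlen : (pref u (2 * m)).length = (substW ξ (pref u m)).length := by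
    rw [pref_length, substW_length h2, pref_length]
  have := List.prefix_of_prefix_length_le h1 h2' (le_of_eq hlen)
  exact this.eq_of_length hlen

lemma rec2 {ξ : Bool → List Bool} {u : ℕ → Bool} (h2 : ∀ a, (ξ a).length = 2)
    (hu : IsOneSidedFixedPoint ξ u) (n j : ℕ) (hj : j < 2) :
    u (2 * n + j) = (ξ (u n)).getD j false := by
  have hd := doubling h2 hu (n + 1)
  rw [pref_succ, substW_append] at hd
  have hW : substW ξ [u n] = ξ (u n) := by simp [substW]
  rw [hW, ← doubling h2 hu n] at hd
  have : u (2 * n + j) = (pref u (2 * (n + 1))).getD (2 * n + j) false := by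
    rw [pref_getD u (by omega)]
  rw [this, hd, List.getD_append_right _ _ _ _ (by rw [pref_length]; omega)]
  congr 1
  rw [pref_length]
  omega

lemma substPow_succ (ξ : Bool → List Bool) (k : ℕ) (a : Bool) :
    substPow ξ (k + 1) a = substW ξ (substPow ξ k a) :=
  Function.iterate_succ_apply' _ _ _

lemma pref_pow {ξ : Bool → List Bool} {u : ℕ → Bool} (h2 : ∀ a, (ξ a).length = 2)
    (hu : IsOneSidedFixedPoint ξ u) (t : ℕ) :
    pref u (2 ^ t) = substPow ξ t (u 0) := by
  induction t with
  | zero =>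
      have h1 : List.range 1 = [0] := rfl
      simp [pref, substPow, h1]
  | succ t ih =>
      have : (2 : ℕ) ^ (t + 1) = 2 * 2 ^ t := by ring
      rw [this, doubling h2 hu, ih, substPow_succ]

lemma iterW_append (ξ : Bool → List Bool) (t : ℕ) (l₁ l₂ : List Bool) :
    (substW ξ)^[t] (l₁ ++ l₂) = (substW ξ)^[t] l₁ ++ (substW ξ)^[t] l₂ := by
  induction t generalizing l₁ l₂ with
  | zero => simp
  | succ t ih => rw [Function.iterate_succ_apply, Function.iterate_succ_apply,
      Function.iterate_succ_apply, substW_append, ih]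

lemma iterW_infix (ξ : Bool → List Bool) (t : ℕ) {l₁ l₂ : List Bool} (h : l₁ <:+: l₂) :
    (substW ξ)^[t] l₁ <:+: (substW ξ)^[t] l₂ := by
  obtain ⟨s, r, rfl⟩ := h
  rw [iterW_append, iterW_append]
  exact ⟨_, _, rfl⟩

lemma substPow_length {ξ : Bool → List Bool} (h2 : ∀ a, (ξ a).length = 2) (k : ℕ) (a : Bool) :
    (substPow ξ k a).length = 2 ^ k := by
  induction k with
  | zero => simp [substPow]
  | succ k ih => rw [substPow_succ, substW_length h2, ih]; ring

end TMPDAux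
namespace TMPDAux

/-! ### Suffix nesting and the two-sided extension -/

lemma substPow_two_add (ξ : Bool → List Bool) (k : ℕ) (a : Bool) :
    substPow ξ (2 * k + 2) a = (substW ξ)^[2 * k] (substW ξ (substW ξ [a])) := by
  show (substW ξ)^[2 * k + 2] [a] = _
  rw [Function.iterate_add_apply]
  rfl

lemma suffix_step {ξ : Bool → List Bool}
    (hss : ∃ s, substW ξ (substW ξ [false]) = s ++ [false]) (k : ℕ) :
    substPow ξ (2 * k) false <:+ substPow ξ (2 * k + 2) false := by
  obtain ⟨s, hs⟩ := hss
  rw [substPow_two_add, hs, iterW_append]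
  exact ⟨_, rfl⟩

lemma suffix_mono {ξ : Bool → List Bool}
    (hss : ∃ s, substW ξ (substW ξ [false]) = s ++ [false]) {k k' : ℕ} (h : k ≤ k') :
    substPow ξ (2 * k) false <:+ substPow ξ (2 * k') false := by
  induction k' with
  | zero => rw [Nat.le_zero.mp h]
  | succ k' ih =>
      rcases Nat.lt_or_ge k (k' + 1) with h' | h'
      · have : 2 * (k' + 1) = 2 * k' + 2 := by ring
        rw [this]
        exact (ih (by omega)).trans (suffix_step hss k')
      · rw [Nat.le_antisymm h h']

/-- Two-sided extension of a fixed point, using `ξ²`-suffix-nesting on the left. -/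
def leftExt (ξ : Bool → List Bool) (u : ℕ → Bool) : BiSeq Bool := fun n =>
  if 0 ≤ n then u n.toNat
  else (substPow ξ (2 * (-n).toNat) false).getD (2 ^ (2 * (-n).toNat) - (-n).toNat) false

lemma leftExt_nonneg (ξ : Bool → List Bool) (u : ℕ → Bool) {n : ℤ} (h : 0 ≤ n) :
    leftExt ξ u n = u n.toNat := if_pos h

lemma stable_mono {ξ : Bool → List Bool} (h2 : ∀ a, (ξ a).length = 2)
    (hss : ∃ s, substW ξ (substW ξ [false]) = s ++ [false])
    {j k₁ k₂ : ℕ} (hj : j ≤ 2 ^ (2 * k₁)) (hk : k₁ ≤ k₂) :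
    (substPow ξ (2 * k₁) false).getD (2 ^ (2 * k₁) - j) false
      = (substPow ξ (2 * k₂) false).getD (2 ^ (2 * k₂) - j) false := by
  obtain ⟨s, hs⟩ := suffix_mono hss hk
  have hl1 : (substPow ξ (2 * k₁) false).length = 2 ^ (2 * k₁) := substPow_length h2 _ _
  have hl2 : (substPow ξ (2 * k₂) false).length = 2 ^ (2 * k₂) := substPow_length h2 _ _
  have hsl : s.length + 2 ^ (2 * k₁) = 2 ^ (2 * k₂) := by
    rw [← hl1, ← hl2, ← hs]; simp
  rw [← hs, List.getD_append_right _ _ _ _ (by omega)]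
  congr 1
  omega

lemma le_pow2 (m : ℕ) : m ≤ 2 ^ (2 * m) :=
  le_of_lt (lt_of_lt_of_le (Nat.lt_two_pow_self (n := m)) (Nat.pow_le_pow_right (by norm_num) (by omega)))

lemma leftExt_neg {ξ : Bool → List Bool} (u : ℕ → Bool) (h2 : ∀ a, (ξ a).length = 2)
    (hss : ∃ s, substW ξ (substW ξ [false]) = s ++ [false])
    {k j : ℕ} (h1 : 1 ≤ j) (hk : j ≤ 2 ^ (2 * k)) :
    leftExt ξ u (-(j : ℤ)) = (substPow ξ (2 * k) false).getD (2 ^ (2 * k) - j) false := by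
  have hneg : ¬ (0 : ℤ) ≤ -(j : ℤ) := by omega
  have htn : (-(-(j : ℤ))).toNat = j := by omega
  rw [leftExt, if_neg hneg, htn]
  rw [stable_mono h2 hss (le_pow2 j) (le_max_left j k),
      stable_mono h2 hss hk (le_max_right j k)]

/-- The 4-block decoding lemma. -/
lemma block4 {ξ : Bool → List Bool} (h2 : ∀ a, (ξ a).length = 2)
    (l : List Bool) {q : ℕ} (hq : q < l.length) {j : ℕ} (hj : j < 4) :
    (substW ξ (substW ξ l)).getD (4 * q + j) false
      = (substW ξ (substW ξ [l.getD q false])).getD j false := by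
  have hB : ∀ a, ((fun a => (ξ a).flatMap ξ) a).length = 4 := by
    intro a
    show ((ξ a).flatMap ξ).length = 4
    have : (ξ a).flatMap ξ = substW ξ (ξ a) := rfl
    rw [this, substW_length h2, h2]
  have hL : substW ξ (substW ξ l) = l.flatMap (fun a => (ξ a).flatMap ξ) := by
    show (l.flatMap ξ).flatMap ξ = _
    rw [List.flatMap_assoc]
  have hR : substW ξ (substW ξ [l.getD q false]) = (ξ (l.getD q false)).flatMap ξ := by
    show ([l.getD q false].flatMap ξ).flatMap ξ = _
    simp
  rw [hL, hR, getD_flatMap hB l q j hq hj]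

lemma leftExt_block {ξ : Bool → List Bool} {u : ℕ → Bool} (h2 : ∀ a, (ξ a).length = 2)
    (hss : ∃ s, substW ξ (substW ξ [false]) = s ++ [false])
    (hu : IsOneSidedFixedPoint ξ u)
    (n : ℤ) {j : ℕ} (hj : j < 4) :
    leftExt ξ u (4 * n + j) = (substW ξ (substW ξ [leftExt ξ u n])).getD j false := by
  rcases le_or_gt 0 n with hn | hn
  · -- nonnegative case, via the ℕ recurrence
    obtain ⟨m, rfl⟩ := Int.eq_ofNat_of_zero_le hn
    have e1 : (4 * (m : ℤ) + j) = ((4 * m + j : ℕ) : ℤ) := by push_cast; ring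
    rw [e1, leftExt_nonneg _ _ (by positivity), leftExt_nonneg _ _ (by positivity)]
    simp only [Int.toNat_natCast]
    -- ℕ statement : u (4*m+j) = (substW ξ (substW ξ [u m])).getD j false
    have hd : pref u (4 * m + 4) = pref u (4 * m) ++ substW ξ (substW ξ [u m]) := by
      have e2 : 4 * m + 4 = 2 * (2 * (m + 1)) := by ring
      have e3 : 4 * m = 2 * (2 * m) := by ring
      rw [e2, doubling h2 hu, doubling h2 hu, pref_succ, substW_append, substW_append,
        e3, doubling h2 hu, doubling h2 hu]
    have : u (4 * m + j) = (pref u (4 * m + 4)).getD (4 * m + j) false := by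
      rw [pref_getD u (by omega)]
    rw [this, hd, List.getD_append_right _ _ _ _ (by rw [pref_length]; omega)]
    congr 1
    rw [pref_length]
    omega
  · -- negative case
    set m : ℕ := (-n).toNat with hm
    have hm1 : 1 ≤ m := by omega
    have hnm : n = -(m : ℤ) := by omega
    have hr : (4 * n + j) = -((4 * m - j : ℕ) : ℤ) := by
      have : (j:ℤ) < 4 := by exact_mod_cast hj
      push_cast [Nat.cast_sub (by omega : j ≤ 4 * m)]
      omega
    have hmle : m ≤ 2 ^ (2 * m) := le_pow2 m
    have hrle : 4 * m - j ≤ 2 ^ (2 * (m + 1)) := by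
      have : 2 ^ (2 * (m + 1)) = 4 * 2 ^ (2 * m) := by
        rw [show 2 * (m + 1) = 2 * m + 2 by ring, pow_add]; ring
      omega
    rw [hr, leftExt_neg u h2 hss (by omega) hrle, hnm, leftExt_neg u h2 hss hm1 hmle]
    have hidx : 2 ^ (2 * (m + 1)) - (4 * m - j) = 4 * (2 ^ (2 * m) - m) + j := by
      have : 2 ^ (2 * (m + 1)) = 4 * 2 ^ (2 * m) := by
        rw [show 2 * (m + 1) = 2 * m + 2 by ring, pow_add]; ring
      omega
    have hPP : substPow ξ (2 * (m + 1)) false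
        = substW ξ (substW ξ (substPow ξ (2 * m) false)) := by
      have : 2 * (m + 1) = (2 * m + 1) + 1 := by ring
      rw [this, substPow_succ, substPow_succ]
    rw [hPP, hidx, block4 h2 _ (by rw [substPow_length h2]; omega) hj]

end TMPDAux
namespace TMPDAux

/-! ### Hull membership -/

lemma window_norm (x : BiSeq Bool) (i : ℤ) (m : ℕ) :
    ((List.range m).map (fun j => x (i + j))) = (List.range m).map (fun j : ℕ => x (i + (j : ℤ))) := by
  simp only [List.bind_eq_flatMap, List.pure_def, List.map_flatMap]
  induction (List.range m) with
  | nil => rfl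
  | cons a t ih => simpa [List.flatMap_cons] using ih

lemma take_drop_infix (l : List Bool) (d m : ℕ) : (l.drop d).take m <:+: l :=
  ⟨l.take d, (l.drop d).drop m, by rw [List.append_assoc, List.take_append_drop,
    List.take_append_drop]⟩

lemma leftExt_mem_hull {ξ : Bool → List Bool} {u : ℕ → Bool}
    (h2 : ∀ a, (ξ a).length = 2)
    (hss : ∃ s, substW ξ (substW ξ [false]) = s ++ [false])
    (hu : IsOneSidedFixedPoint ξ u) (hu0 : u 0 = false)
    (c0 : ℕ) (hc0 : [false, false] <:+: substPow ξ c0 false) :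
    leftExt ξ u ∈ substHull ξ := by
  intro i m
  set K : ℕ := i.natAbs + m + 1 with hK
  have hN : i.natAbs + m + 1 ≤ 2 ^ (2 * K) := by
    calc i.natAbs + m + 1 = K := rfl
    _ ≤ 2 ^ (2 * K) := le_pow2 K
  set N : ℕ := 2 ^ (2 * K) with hNdef
  set P : List Bool := substPow ξ (2 * K) false with hP
  have hPlen : P.length = N := substPow_length h2 _ _
  set L : List Bool := (List.range (2 * N)).map
    (fun t : ℕ => leftExt ξ u (-(N : ℤ) + (t : ℤ))) with hL
  -- Step A : L = P ++ P
  have hA : L = P ++ P := by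
    apply List.ext_getElem
    · simp only [hL, List.length_map, List.length_range, List.length_append, hPlen]; omega
    · intro t ht ht'
      have ht2 : t < 2 * N := by simpa [hL] using ht
      have hLt : L[t]'ht = leftExt ξ u (-(N : ℤ) + (t : ℤ)) := by simp [hL]
      rw [hLt, ← List.getD_eq_getElem _ false ht']
      rcases lt_or_ge t N with htN | htN
      · have e : -(N : ℤ) + (t : ℤ) = -((N - t : ℕ) : ℤ) := by
          push_cast [Nat.cast_sub (le_of_lt htN)]; ring
        rw [e, leftExt_neg u h2 hss (k := K) (by omega) (by omega)]
        rw [List.getD_append _ _ _ _ (by omega)]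
        congr 1
        omega
      · have e : -(N : ℤ) + (t : ℤ) = ((t - N : ℕ) : ℤ) := by
          push_cast [Nat.cast_sub htN]; ring
        rw [e, leftExt_nonneg _ _ (by positivity), Int.toNat_natCast]
        rw [List.getD_append_right _ _ _ _ (by omega)]
        have hPu : P = pref u N := by rw [hP, ← hu0, ← pref_pow h2 hu]
        rw [hPlen, hPu, pref_getD u (by omega)]
  -- Step B : the window is an infix of L
  have hiN : -(N : ℤ) ≤ i ∧ i + (m : ℤ) ≤ (N : ℤ) := by constructor <;> omega
  set d : ℕ := (i + N).toNat with hd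
  have hdZ : (d : ℤ) = i + N := by omega
  have hdm : d + m ≤ 2 * N := by omega
  have hB : (List.range m).map (fun j : ℕ => leftExt ξ u (i + (j : ℤ))) = (L.drop d).take m := by
    apply List.ext_getElem
    · simp only [List.length_map, List.length_range, List.length_take, List.length_drop, hL]
      omega
    · intro t ht1 ht2
      simp only [List.getElem_take, List.getElem_drop, List.getElem_map, List.getElem_range, hL]
      congr 1
      push_cast
      omega
  refine ⟨false, 2 * K + c0, ?_⟩
  rw [window_norm]
  have h1 : (List.range m).map (fun j : ℕ => leftExt ξ u (i + (j : ℤ))) <:+: L := by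
    rw [hB]; exact take_drop_infix _ _ _
  have h2' : L <:+: substPow ξ (2 * K + c0) false := by
    rw [hA]
    have hPP : P ++ P = (substW ξ)^[2 * K] [false, false] := by
      have e : ([false, false] : List Bool) = [false] ++ [false] := rfl
      rw [e, iterW_append, hP]
      rfl
    rw [hPP]
    have e2 : substPow ξ (2 * K + c0) false = (substW ξ)^[2 * K] (substPow ξ c0 false) := by
      show (substW ξ)^[2 * K + c0] [false] = _
      rw [Function.iterate_add_apply]
      rfl
    rw [e2]
    exact iterW_infix ξ _ hc0
  exact h1.trans h2'

lemma hull_shift {ξ : Bool → List Bool} {x : BiSeq Bool} (hx : x ∈ substHull ξ) (n : ℤ) :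
    shiftZ n x ∈ substHull ξ := by
  intro i m
  obtain ⟨a, k, h⟩ := hx (i + n) m
  refine ⟨a, k, ?_⟩
  rw [window_norm]
  rw [window_norm] at h
  have e : (List.range m).map (fun j : ℕ => shiftZ n x (i + (j : ℤ)))
      = (List.range m).map (fun j : ℕ => x (i + n + (j : ℤ))) := by
    apply List.map_congr_left
    intro j _
    show x (i + (j : ℤ) + n) = x (i + n + (j : ℤ))
    ring_nf
  rw [e]
  exact h

end TMPDAux
namespace TMPDAux

/-! ### Specializations to Thue–Morse and period-doubling -/

lemma h2TM : ∀ a, (thueMorse a).length = 2 := fun _ => rfl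

lemma h2PD : ∀ a, (periodDoubling a).length = 2 := by intro a; cases a <;> rfl

lemma hssTM : ∃ s, substW thueMorse (substW thueMorse [false]) = s ++ [false] :=
  ⟨[false, true, true], by decide⟩

lemma hssPD : ∃ s, substW periodDoubling (substW periodDoubling [false]) = s ++ [false] :=
  ⟨[false, true, false], by decide⟩

lemma hc0TM : [false, false] <:+: substPow thueMorse 3 false := by decide

lemma hc0PD : [false, false] <:+: substPow periodDoubling 2 false := by decide

lemma TMword (c : Bool) : substW thueMorse (substW thueMorse [c]) = [c, !c, !c, c] := by
  cases c <;> rfl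

lemma PDword (c : Bool) :
    substW periodDoubling (substW periodDoubling [c]) = [false, true, false, c] := by
  cases c <;> rfl

section Spec

variable {u w : ℕ → Bool}

lemma XTblock (hu : IsOneSidedFixedPoint thueMorse u) (n : ℤ) {j : ℕ} (hj : j < 4) :
    leftExt thueMorse u (4 * n + j)
      = [leftExt thueMorse u n, !leftExt thueMorse u n, !leftExt thueMorse u n,
          leftExt thueMorse u n].getD j false := by
  rw [leftExt_block h2TM hssTM hu n hj, TMword]

lemma WPblock (hw : IsOneSidedFixedPoint periodDoubling w) (n : ℤ) {j : ℕ} (hj : j < 4) :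
    leftExt periodDoubling w (4 * n + j)
      = [false, true, false, leftExt periodDoubling w n].getD j false := by
  rw [leftExt_block h2PD hssPD hw n hj, PDword]

/-- The pair `(abba, baaa)` never occurs at a common position in the two-sided pair. -/
lemma noOccur (hu : IsOneSidedFixedPoint thueMorse u)
    (hw : IsOneSidedFixedPoint periodDoubling w) (n : ℤ) :
    ¬ (leftExt thueMorse u n = false ∧ leftExt thueMorse u (n + 1) = true ∧
       leftExt thueMorse u (n + 2) = true ∧ leftExt thueMorse u (n + 3) = false ∧
       leftExt periodDoubling w n = true ∧ leftExt periodDoubling w (n + 1) = false ∧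
       leftExt periodDoubling w (n + 2) = false ∧ leftExt periodDoubling w (n + 3) = false) := by
  rintro ⟨h1, h2, h3, h4, h5, h6, h7, h8⟩
  set q := n / 4 with hq
  have hmod : n % 4 = 0 ∨ n % 4 = 1 ∨ n % 4 = 2 ∨ n % 4 = 3 := by omega
  rcases hmod with e | e | e | e
  · rw [show n = 4 * q + ((0 : ℕ) : ℤ) by omega, WPblock hw q (by norm_num)] at h5
    simp at h5
  · rw [show n = 4 * q + ((1 : ℕ) : ℤ) by omega, XTblock hu q (by norm_num)] at h1
    rw [show n + 1 = 4 * q + ((2 : ℕ) : ℤ) by omega, XTblock hu q (by norm_num)] at h2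
    simp at h1 h2
    rw [h1] at h2
    exact absurd h2 (by simp)
  · rw [show n = 4 * q + ((2 : ℕ) : ℤ) by omega, WPblock hw q (by norm_num)] at h5
    simp at h5
  · rw [show n + 2 = 4 * (q + 1) + ((1 : ℕ) : ℤ) by omega, WPblock hw (q + 1) (by norm_num)] at h7
    simp at h7

/-! ### One-sided recurrences -/

lemma uTM_even (hu : IsOneSidedFixedPoint thueMorse u) (n : ℕ) : u (2 * n) = u n := by
  have h := rec2 h2TM hu n 0 (by norm_num)
  simpa [thueMorse] using h

lemma uTM_odd (hu : IsOneSidedFixedPoint thueMorse u) (n : ℕ) : u (2 * n + 1) = !u n := by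
  have h := rec2 h2TM hu n 1 (by norm_num)
  simpa [thueMorse] using h

lemma wPD_even (hw : IsOneSidedFixedPoint periodDoubling w) (n : ℕ) : w (2 * n) = false := by
  have h := rec2 h2PD hw n 0 (by norm_num)
  rw [show 2 * n + 0 = 2 * n by ring] at h
  rw [h]
  cases w n <;> rfl

lemma wPD_odd (hw : IsOneSidedFixedPoint periodDoubling w) (n : ℕ) : w (2 * n + 1) = !w n := by
  have h := rec2 h2PD hw n 1 (by norm_num)
  rw [h]
  cases w n <;> rfl

end Spec

/-! ### Topology helpers -/

lemma open_eval1 (k : ℤ) (v : Bool) : IsOpen {r : BiSeq Bool × BiSeq Bool | r.1 k = v} := by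
  have hc : Continuous (fun r : BiSeq Bool × BiSeq Bool => r.1 k) :=
    (continuous_apply k).comp continuous_fst
  show IsOpen ((fun r : BiSeq Bool × BiSeq Bool => r.1 k) ⁻¹' {v})
  exact (isOpen_discrete _).preimage hc

lemma open_eval2 (k : ℤ) (v : Bool) : IsOpen {r : BiSeq Bool × BiSeq Bool | r.2 k = v} := by
  have hc : Continuous (fun r : BiSeq Bool × BiSeq Bool => r.2 k) :=
    (continuous_apply k).comp continuous_snd
  show IsOpen ((fun r : BiSeq Bool × BiSeq Bool => r.2 k) ⁻¹' {v})
  exact (isOpen_discrete _).preimage hc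

end TMPDAux
/-- With `u` the Thue–Morse fixed point (seed `a`) and `w` the aperiodic
period-doubling fixed point: `(abba, baaa)` is a prefix of `(u, σw)`, but never occurs
at a common position in `(u, w)`; consequently the product of the Thue–Morse and
period-doubling hulls is not minimal. (`a = false`, `b = true`.) -/
theorem thueMorse_periodDoubling_product_not_minimal
    (u w : ℕ → Bool)
    (hu : IsOneSidedFixedPoint thueMorse u) (hu0 : u 0 = false)
    (hw : IsOneSidedFixedPoint periodDoubling w) (hw0 : w 0 = false)
    (hwap : ¬ ∃ p : ℕ, 0 < p ∧ ∀ n : ℕ, w (n + p) = w n) :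
    (u 0 = false ∧ u 1 = true ∧ u 2 = true ∧ u 3 = false) ∧
    (w 1 = true ∧ w 2 = false ∧ w 3 = false ∧ w 4 = false) ∧
    (∀ n : ℕ, ¬ ((u n = false ∧ u (n+1) = true ∧ u (n+2) = true ∧ u (n+3) = false) ∧
                 (w n = true ∧ w (n+1) = false ∧ w (n+2) = false ∧ w (n+3) = false))) ∧
    ¬ IsMinimalSetP (substHull thueMorse ×ˢ substHull periodDoubling) := by
  classical
  have hu1 : u 1 = true := by
    have h := TMPDAux.uTM_odd hu 0
    norm_num [hu0] at h
    exact h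
  have hu2 : u 2 = true := by
    have h := TMPDAux.uTM_even hu 1
    norm_num [hu1] at h
    exact h
  have hu3 : u 3 = false := by
    have h := TMPDAux.uTM_odd hu 1
    norm_num [hu1] at h
    exact h
  have hw1 : w 1 = true := by
    have h := TMPDAux.wPD_odd hw 0
    norm_num [hw0] at h
    exact h
  have hw2 : w 2 = false := by
    have h := TMPDAux.wPD_even hw 1
    norm_num at h
    exact h
  have hw3 : w 3 = false := by
    have h := TMPDAux.wPD_odd hw 1
    norm_num [hw1] at h
    exact h
  have hw4 : w 4 = false := by
    have h := TMPDAux.wPD_even hw 2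
    norm_num at h
    exact h
  refine ⟨⟨hu0, hu1, hu2, hu3⟩, ⟨hw1, hw2, hw3, hw4⟩, ?_, ?_⟩
  · -- no common occurrence in the one-sided sequences
    rintro n ⟨⟨hA0, hA1, hA2, hA3⟩, hB0, hB1, hB2, hB3⟩
    rcases Nat.even_or_odd n with ⟨m, hm⟩ | ⟨m, hm⟩
    · rw [show n = 2 * m by omega, TMPDAux.wPD_even hw] at hB0
      exact absurd hB0 (by simp)
    · rw [show n + 1 = 2 * (m + 1) by omega, TMPDAux.uTM_even hu] at hA1
      rw [show n + 2 = 2 * (m + 1) + 1 by omega, TMPDAux.uTM_odd hu] at hA2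
      rw [hA1] at hA2
      exact absurd hA2 (by simp)
  · -- non-minimality of the product
    intro hmin
    obtain ⟨-, -, -, hdense⟩ := hmin
    set X := TMPDAux.leftExt thueMorse u with hXd
    set W := TMPDAux.leftExt periodDoubling w with hWd
    have hXmem : X ∈ substHull thueMorse :=
      TMPDAux.leftExt_mem_hull TMPDAux.h2TM TMPDAux.hssTM hu hu0 3 TMPDAux.hc0TM
    have hWmem : W ∈ substHull periodDoubling :=
      TMPDAux.leftExt_mem_hull TMPDAux.h2PD TMPDAux.hssPD hw hw0 2 TMPDAux.hc0PD
    have hp : (X, W) ∈ substHull thueMorse ×ˢ substHull periodDoubling := ⟨hXmem, hWmem⟩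
    have hq : (X, shiftZ 1 W) ∈ substHull thueMorse ×ˢ substHull periodDoubling :=
      ⟨hXmem, TMPDAux.hull_shift hWmem 1⟩
    have hcl := hdense _ hp
    have hqcl : (X, shiftZ 1 W) ∈ closure (orbitP (X, W)) := by rw [hcl]; exact hq
    have hXv : ∀ k : ℕ, X (k : ℤ) = u k := by
      intro k
      rw [hXd, TMPDAux.leftExt_nonneg _ _ (by positivity), Int.toNat_natCast]
    have hWv : ∀ k : ℕ, W (k : ℤ) = w k := by
      intro k
      rw [hWd, TMPDAux.leftExt_nonneg _ _ (by positivity), Int.toNat_natCast]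
    set U : Set (BiSeq Bool × BiSeq Bool) :=
      {r | r.1 0 = false ∧ r.1 1 = true ∧ r.1 2 = true ∧ r.1 3 = false ∧
           r.2 0 = true ∧ r.2 1 = false ∧ r.2 2 = false ∧ r.2 3 = false} with hU
    have hUopen : IsOpen U :=
      IsOpen.and (TMPDAux.open_eval1 0 false) (IsOpen.and (TMPDAux.open_eval1 1 true)
        (IsOpen.and (TMPDAux.open_eval1 2 true) (IsOpen.and (TMPDAux.open_eval1 3 false)
        (IsOpen.and (TMPDAux.open_eval2 0 true) (IsOpen.and (TMPDAux.open_eval2 1 false)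
        (IsOpen.and (TMPDAux.open_eval2 2 false) (TMPDAux.open_eval2 3 false)))))))
    have hqU : (X, shiftZ 1 W) ∈ U := by
      refine ⟨?_, ?_, ?_, ?_, ?_, ?_, ?_, ?_⟩
      · simpa using (hXv 0).trans hu0
      · simpa using (hXv 1).trans hu1
      · simpa using (hXv 2).trans hu2
      · simpa using (hXv 3).trans hu3
      · simpa [shiftZ] using (hWv 1).trans hw1
      · simpa [shiftZ] using (hWv 2).trans hw2
      · simpa [shiftZ] using (hWv 3).trans hw3
      · simpa [shiftZ] using (hWv 4).trans hw4
    obtain ⟨r, hr⟩ := mem_closure_iff.mp hqcl U hUopen hqU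
    have hrU := hr.1
    have hrOrb := hr.2
    simp only [orbitP, Set.mem_setOf_eq] at hrOrb
    obtain ⟨k, rfl⟩ := hrOrb
    simp only [hU, Set.mem_setOf_eq] at hrU
    obtain ⟨g1, g2, g3, g4, g5, g6, g7, g8⟩ := hrU
    refine TMPDAux.noOccur hu hw k ⟨?_, ?_, ?_, ?_, ?_, ?_, ?_, ?_⟩
    · simpa [prodShiftZ, shiftZ] using g1
    · simpa [prodShiftZ, shiftZ, add_comm] using g2
    · simpa [prodShiftZ, shiftZ, add_comm] using g3
    · simpa [prodShiftZ, shiftZ, add_comm] using g4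
    · simpa [prodShiftZ, shiftZ] using g5
    · simpa [prodShiftZ, shiftZ, add_comm] using g6
    · simpa [prodShiftZ, shiftZ, add_comm] using g7
    · simpa [prodShiftZ, shiftZ, add_comm] using g8
end
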